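/- arXiv:2308.16579 — 6 statements merged into one kernel-verified Lean document; each statement's English description precedes it below -/
import Mathlib

section
/- Let T be a bounded linear operator on L^∞(𝕋; ℝ) that maps even functions to even functions, with operator norm D := ‖T‖ < 1. Let F, N ∈ L^∞(𝕋; ℝ) be even, set δ := ‖F‖_{L^∞} and n := ‖N‖_{L^∞}, and assume n > 0 and δ < (1 − D)²/(4n). Define ε := (1 − D − √((1 − D)² − 4δn))/(2n), X_ε := {v ∈ L^∞(𝕋) : v(x) = v(−x) a.e., ‖v‖_{L^∞} ≤ ε}, and G[v] := (I − T)^{-1}(−F − N·v²). Then: (1) G(X_ε) ⊆ X_ε; and (2) ‖G[v] − G[w]‖_{L^∞} ≤ k·‖v − w‖_{L^∞} for all v, w ∈ X_ε, where k := 2nε/(1 − D) < 1. -/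
open MeasureTheory

instance : Fact (0 < 2 * Real.pi) := ⟨by positivity⟩

/-- `ε = (1 - D - √((1-D)² - 4δn))/(2n)`. -/
noncomputable def fixedPointEps (D δ n : ℝ) : ℝ :=
  (1 - D - Real.sqrt ((1 - D) ^ 2 - 4 * δ * n)) / (2 * n)

/-! Since `‖T‖ < 1`, the Neumann series inverts `I - T`, and `(1 - ‖T‖) ‖g‖ ≤ ‖g - T g‖`.
The even functions form a closed `T`-invariant subspace on which `T` still has norm `< 1`, so
`(I - T)⁻¹` preserves evenness. Since `ε` is the smaller root of `n ε² - (1 - D) ε + δ`,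
`‖F + N v²‖ ≤ δ + n ε² = (1 - D) ε` on `X_ε`; and `N v² - N w² = N (v + w) (v - w)` gives the
Lipschitz constant `2 n ε / (1 - D)`, which is `< 1` because the discriminant is positive. -/

open scoped ENNReal

section NeumannSeries

variable {𝕜 E : Type*} [NontriviallyNormedField 𝕜] [NormedAddCommGroup E] [NormedSpace 𝕜 E]
  {T : E →L[𝕜] E}

variable (T) in
theorem ContinuousLinearMap.one_sub_opNorm_mul_norm_le (g : E) :
    (1 - ‖T‖) * ‖g‖ ≤ ‖g - T g‖ := by
  have hg : ‖g‖ ≤ ‖g - T g‖ + ‖T g‖ := norm_le_norm_sub_add g (T g)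
  nlinarith [T.le_opNorm g]

theorem ContinuousLinearMap.eq_of_sub_apply_eq (hT : ‖T‖ < 1) {g g' : E}
    (h : g - T g = g' - T g') : g = g' := by
  have h0 : (g - g') - T (g - g') = 0 := by rw [map_sub, sub_sub_sub_comm, h, sub_self]
  have := T.one_sub_opNorm_mul_norm_le (g - g')
  rw [h0, norm_zero] at this
  exact sub_eq_zero.mp (norm_le_zero_iff.mp
    (nonpos_of_mul_nonpos_right this (sub_pos.mpr hT)))

variable [CompleteSpace E]

theorem ContinuousLinearMap.exists_sub_apply_eq (hT : ‖T‖ < 1) (h : E) :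
    ∃ g, g - T g = h := by
  refine ⟨(↑(Units.oneSub T hT)⁻¹ : E →L[𝕜] E) h, ?_⟩
  simpa [Units.val_oneSub] using congr($(Units.mul_inv (Units.oneSub T hT)) h)

theorem ContinuousLinearMap.mem_of_sub_apply_mem (hT : ‖T‖ < 1) {S : Submodule 𝕜 E}
    (hS : IsClosed (S : Set E)) (hTS : ∀ v ∈ S, T v ∈ S) {g : E} (hg : g - T g ∈ S) :
    g ∈ S := by
  have : CompleteSpace S := hS.completeSpace_coe
  have hTS' : ‖T.restrict hTS‖ < 1 :=
    ((T.restrict hTS).opNorm_le_bound (norm_nonneg T) fun v => T.le_opNorm v).trans_lt hT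
  obtain ⟨g', hg'⟩ := (T.restrict hTS).exists_sub_apply_eq hTS' ⟨g - T g, hg⟩
  have : (g' : E) - T g' = g - T g := congr_arg Subtype.val hg'
  exact T.eq_of_sub_apply_eq hT this.symm ▸ g'.2

end NeumannSeries

section Discriminant

variable {D δ n : ℝ} (hn : 0 < n) (hδ : 0 ≤ δ) (hD : D < 1) (hδn : δ < (1 - D) ^ 2 / (4 * n))
include hn hδ hD hδn

theorem fixedPointEps_spec :
    0 ≤ fixedPointEps D δ n ∧ 2 * n * fixedPointEps D δ n < 1 - D ∧
      n * fixedPointEps D δ n ^ 2 + δ = (1 - D) * fixedPointEps D δ n := by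
  set s := Real.sqrt ((1 - D) ^ 2 - 4 * δ * n)
  have hdisc : 0 < (1 - D) ^ 2 - 4 * δ * n := by
    nlinarith [(lt_div_iff₀ (by positivity : (0 : ℝ) < 4 * n)).mp hδn]
  have hs2 : s ^ 2 = (1 - D) ^ 2 - 4 * δ * n := Real.sq_sqrt hdisc.le
  have hs0 : 0 < s := Real.sqrt_pos.mpr hdisc
  have hs : s ≤ 1 - D := by nlinarith
  have hε : 2 * n * fixedPointEps D δ n = 1 - D - s := by
    rw [fixedPointEps, mul_div_cancel₀ _ (by positivity)]
  refine ⟨?_, by linarith, ?_⟩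
  · nlinarith
  · nlinarith

end Discriminant

namespace MeasureTheory.Lp

variable {α E : Type*} [MeasurableSpace α] {μ : Measure α} [NormedAddCommGroup E]
  {p : ℝ≥0∞} (𝕜 : Type*) [NormedRing 𝕜] [Module 𝕜 E] [IsBoundedSMul 𝕜 E]
  {σ : α → α} (hσ : MeasurePreserving σ μ μ)

def invariantSubmodule : Submodule 𝕜 (Lp E p μ) :=
  LinearMap.eqLocus (compMeasurePreservingₗ 𝕜 σ hσ) LinearMap.id

variable {𝕜 hσ} in
theorem mem_invariantSubmodule_iff {v : Lp E p μ} :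
    v ∈ invariantSubmodule 𝕜 hσ ↔ ∀ᵐ x ∂μ, v (σ x) = v x := by
  change compMeasurePreserving σ hσ v = v ↔ _
  rw [Lp.ext_iff]
  exact ⟨(coeFn_compMeasurePreserving v hσ).symm.trans, (coeFn_compMeasurePreserving v hσ).trans⟩

theorem isClosed_invariantSubmodule [Fact (1 ≤ p)] :
    IsClosed (invariantSubmodule (E := E) (p := p) 𝕜 hσ : Set (Lp E p μ)) :=
  isClosed_eq (isometry_compMeasurePreserving hσ).continuous continuous_id

section QuadraticForcing

variable (F N : Lp ℝ ∞ μ)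

-- `•` is the pointwise (Hölder) product `L^∞ × L^∞ → L^∞`.
noncomputable def quadraticForcing (v : Lp ℝ ∞ μ) : Lp ℝ ∞ μ :=
  -F - N • (v • v : Lp ℝ ∞ μ)

theorem coeFn_quadraticForcing (v : Lp ℝ ∞ μ) :
    ⇑(quadraticForcing F N v) =ᵐ[μ] fun x => -F x - N x * v x ^ 2 := by
  filter_upwards [coeFn_sub (-F) (N • (v • v : Lp ℝ ∞ μ) : Lp ℝ ∞ μ), coeFn_neg F,
    coeFn_lpSMul (r := ∞) N (v • v : Lp ℝ ∞ μ), coeFn_lpSMul (r := ∞) v v] with x h1 h2 h3 h4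
  simp only [quadraticForcing, h1, Pi.sub_apply, h2, Pi.neg_apply, h3, Pi.smul_apply', h4,
    smul_eq_mul, sq]

theorem norm_quadraticForcing_le (v : Lp ℝ ∞ μ) :
    ‖quadraticForcing F N v‖ ≤ ‖F‖ + ‖N‖ * ‖v‖ ^ 2 :=
  calc ‖quadraticForcing F N v‖ ≤ ‖-F‖ + ‖N • (v • v)‖ := norm_sub_le _ _
    _ ≤ ‖F‖ + ‖N‖ * (‖v‖ * ‖v‖) := by
      rw [norm_neg]
      gcongr
      exact (Lp.norm_smul_le _ _).trans (by gcongr; exact Lp.norm_smul_le _ _)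
    _ = ‖F‖ + ‖N‖ * ‖v‖ ^ 2 := by ring

theorem quadraticForcing_sub (v w : Lp ℝ ∞ μ) :
    quadraticForcing F N v - quadraticForcing F N w = N • ((w + v) • (w - v)) := by
  refine Lp.ext ?_
  filter_upwards [coeFn_sub (quadraticForcing F N v) (quadraticForcing F N w),
    coeFn_quadraticForcing F N v, coeFn_quadraticForcing F N w,
    coeFn_lpSMul (r := ∞) N ((w + v) • (w - v) : Lp ℝ ∞ μ), coeFn_lpSMul (r := ∞) (w + v) (w - v),
    coeFn_add w v, coeFn_sub w v] with x h1 h2 h3 h4 h5 h6 h7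
  simp only [h1, Pi.sub_apply, h2, h3, h4, Pi.smul_apply', h5, h6, Pi.add_apply, h7, smul_eq_mul]
  ring

theorem norm_quadraticForcing_sub_le (v w : Lp ℝ ∞ μ) :
    ‖quadraticForcing F N v - quadraticForcing F N w‖ ≤ ‖N‖ * (‖v‖ + ‖w‖) * ‖v - w‖ := by
  rw [quadraticForcing_sub, mul_assoc, ← norm_sub_rev w v]
  have hvw : ‖((w + v) • (w - v) : Lp ℝ ∞ μ)‖ ≤ (‖v‖ + ‖w‖) * ‖w - v‖ := by
    refine (Lp.norm_smul_le _ _).trans ?_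
    gcongr
    exact (norm_add_le w v).trans_eq (add_comm _ _)
  exact (Lp.norm_smul_le _ _).trans (by gcongr)

variable {F N} in
theorem quadraticForcing_mem_invariantSubmodule {v : Lp ℝ ∞ μ} (hF : F ∈ invariantSubmodule ℝ hσ)
    (hN : N ∈ invariantSubmodule ℝ hσ) (hv : v ∈ invariantSubmodule ℝ hσ) :
    quadraticForcing F N v ∈ invariantSubmodule ℝ hσ := by
  rw [mem_invariantSubmodule_iff] at *
  have h := coeFn_quadraticForcing F N v
  filter_upwards [h, hσ.quasiMeasurePreserving.ae_eq_comp h, hF, hN, hv]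
    with x h1 h2 h3 h4 h5
  simp only [Function.comp_apply] at h2
  rw [h2, h3, h4, h5, h1]

end QuadraticForcing

end MeasureTheory.Lp

/-- The fixed-point proposition: if `T` is a bounded operator on `L^∞(𝕋)` preserving even
functions with `D = ‖T‖ < 1`, `F, N ∈ L^∞(𝕋)` are even with `δ = ‖F‖`, `n = ‖N‖ > 0` and
`δ < (1-D)²/(4n)`, then `G[v] = (I-T)⁻¹(-F - N v²)` (characterized by the defining equation
`(I - T)(G[v]) = -F - N v²` a.e.) maps `X_ε` into itself and is a `k`-contraction on `X_ε`
with `k = 2nε/(1-D) < 1`. -/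
theorem fixedPoint_selfmap_and_contraction
    (T : Lp ℝ ⊤ (volume : Measure (AddCircle (2 * Real.pi))) →L[ℝ]
         Lp ℝ ⊤ (volume : Measure (AddCircle (2 * Real.pi))))
    (hD : ‖T‖ < 1)
    (hTeven : ∀ v : Lp ℝ ⊤ (volume : Measure (AddCircle (2 * Real.pi))),
      (∀ᵐ x : AddCircle (2 * Real.pi), v (-x) = v x) →
      (∀ᵐ x : AddCircle (2 * Real.pi), T v (-x) = T v x))
    (F N : Lp ℝ ⊤ (volume : Measure (AddCircle (2 * Real.pi))))
    (hFeven : ∀ᵐ x : AddCircle (2 * Real.pi), F (-x) = F x)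
    (hNeven : ∀ᵐ x : AddCircle (2 * Real.pi), N (-x) = N x)
    (hn : 0 < ‖N‖)
    (hδ : ‖F‖ < (1 - ‖T‖) ^ 2 / (4 * ‖N‖)) :
    (∀ v : Lp ℝ ⊤ (volume : Measure (AddCircle (2 * Real.pi))),
      (∀ᵐ x : AddCircle (2 * Real.pi), v (-x) = v x) →
      ‖v‖ ≤ fixedPointEps ‖T‖ ‖F‖ ‖N‖ →
      (∃ g : Lp ℝ ⊤ (volume : Measure (AddCircle (2 * Real.pi))),
        ⇑(g - T g) =ᵐ[volume] fun x => -F x - N x * v x ^ 2) ∧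
      ∀ g : Lp ℝ ⊤ (volume : Measure (AddCircle (2 * Real.pi))),
        (⇑(g - T g) =ᵐ[volume] fun x => -F x - N x * v x ^ 2) →
        ((∀ᵐ x : AddCircle (2 * Real.pi), g (-x) = g x) ∧
          ‖g‖ ≤ fixedPointEps ‖T‖ ‖F‖ ‖N‖)) ∧
    2 * ‖N‖ * fixedPointEps ‖T‖ ‖F‖ ‖N‖ / (1 - ‖T‖) < 1 ∧
    (∀ v w gv gw : Lp ℝ ⊤ (volume : Measure (AddCircle (2 * Real.pi))),
      (∀ᵐ x : AddCircle (2 * Real.pi), v (-x) = v x) →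
      ‖v‖ ≤ fixedPointEps ‖T‖ ‖F‖ ‖N‖ →
      (∀ᵐ x : AddCircle (2 * Real.pi), w (-x) = w x) →
      ‖w‖ ≤ fixedPointEps ‖T‖ ‖F‖ ‖N‖ →
      (⇑(gv - T gv) =ᵐ[volume] fun x => -F x - N x * v x ^ 2) →
      (⇑(gw - T gw) =ᵐ[volume] fun x => -F x - N x * w x ^ 2) →
      ‖gv - gw‖ ≤ 2 * ‖N‖ * fixedPointEps ‖T‖ ‖F‖ ‖N‖ / (1 - ‖T‖) * ‖v - w‖) := by
  obtain ⟨hε0, hk, hεeq⟩ := fixedPointEps_spec hn (norm_nonneg F) hD hδ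
  set ε := fixedPointEps ‖T‖ ‖F‖ ‖N‖
  have hD1 : 0 < 1 - ‖T‖ := sub_pos.mpr hD
  have hσ := Measure.measurePreserving_neg (volume : Measure (AddCircle (2 * Real.pi)))
  have hG (v g : Lp ℝ ⊤ (volume : Measure (AddCircle (2 * Real.pi))))
      (h : ⇑(g - T g) =ᵐ[volume] fun x => -F x - N x * v x ^ 2) :
      g - T g = Lp.quadraticForcing F N v :=
    Lp.ext (h.trans (Lp.coeFn_quadraticForcing F N v).symm)
  refine ⟨fun v hv hvε => ⟨?_, fun g hg => ⟨?_, ?_⟩⟩, (div_lt_one hD1).mpr hk, ?_⟩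
  · obtain ⟨g, hg⟩ := T.exists_sub_apply_eq hD (Lp.quadraticForcing F N v)
    exact ⟨g, hg ▸ Lp.coeFn_quadraticForcing F N v⟩
  · have hTσ (u) (hu : u ∈ Lp.invariantSubmodule ℝ hσ) : T u ∈ Lp.invariantSubmodule ℝ hσ :=
      Lp.mem_invariantSubmodule_iff.mpr (hTeven u (Lp.mem_invariantSubmodule_iff.mp hu))
    refine Lp.mem_invariantSubmodule_iff.mp
      (T.mem_of_sub_apply_mem hD (Lp.isClosed_invariantSubmodule ℝ hσ) hTσ ?_)
    rw [hG v g hg]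
    exact Lp.quadraticForcing_mem_invariantSubmodule hσ (Lp.mem_invariantSubmodule_iff.mpr hFeven)
      (Lp.mem_invariantSubmodule_iff.mpr hNeven) (Lp.mem_invariantSubmodule_iff.mpr hv)
  · refine le_of_mul_le_mul_left ?_ hD1
    calc (1 - ‖T‖) * ‖g‖ ≤ ‖g - T g‖ := T.one_sub_opNorm_mul_norm_le g
      _ ≤ ‖F‖ + ‖N‖ * ‖v‖ ^ 2 := hG v g hg ▸ Lp.norm_quadraticForcing_le F N v
      _ ≤ ‖F‖ + ‖N‖ * ε ^ 2 := by gcongr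
      _ = (1 - ‖T‖) * ε := by linarith
  · intro v w gv gw _ hvε _ hwε hgv hgw
    rw [div_mul_eq_mul_div, le_div_iff₀ hD1, mul_comm _ (1 - ‖T‖)]
    calc (1 - ‖T‖) * ‖gv - gw‖ ≤ ‖(gv - gw) - T (gv - gw)‖ := T.one_sub_opNorm_mul_norm_le _
      _ = ‖Lp.quadraticForcing F N v - Lp.quadraticForcing F N w‖ := by
        rw [← hG v gv hgv, ← hG w gw hgw, map_sub, sub_sub_sub_comm]
      _ ≤ ‖N‖ * (‖v‖ + ‖w‖) * ‖v - w‖ := Lp.norm_quadraticForcing_sub_le F N v w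
      _ ≤ ‖N‖ * (ε + ε) * ‖v - w‖ := by gcongr
      _ = 2 * ‖N‖ * ε * ‖v - w‖ := by ring
end

section
/- For all α with −1 < α < 0 and all x with 0 < x < 1, one has 0 < (1 + α)·x^{(1+α)/2}·log(1/x) / (1 − x^{1 + α + (1+α)²/2}) < 1. -/
/-!
With `u = x^{(1+α)/2}` the numerator equals `2u·log(1/u)`, while the denominator exceeds
`1 - u² = 1 - x^{1+α}`; so everything reduces to `2u·log(1/u) ≤ 1 - u²` for `0 < u ≤ 1`.
-/

open Real in
/-- With `y = log (1/u)` this is `y ≤ sinh y`, multiplied by `2u`. -/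
theorem two_mul_mul_log_one_div_le_one_sub_sq {u : ℝ} (hu0 : 0 < u) (hu1 : u ≤ 1) :
    2 * u * log (1 / u) ≤ 1 - u ^ 2 := by
  have h := self_le_sinh_iff.2 (log_nonneg (one_le_one_div hu0 hu1))
  rw [sinh_eq, exp_neg, exp_log (by positivity)] at h
  calc 2 * u * log (1 / u) ≤ 2 * u * ((1 / u - (1 / u)⁻¹) / 2) := by gcongr
    _ = 1 - u ^ 2 := by field_simp

theorem weight_quotient_bound_general (α x : ℝ) (hα1 : -1 < α)
    (hx1 : 0 < x) (hx2 : x < 1) :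
    0 < (1 + α) * x ^ ((1 + α) / 2) * Real.log (1 / x) /
        (1 - x ^ (1 + α + (1 + α) ^ 2 / 2)) ∧
    (1 + α) * x ^ ((1 + α) / 2) * Real.log (1 / x) /
        (1 - x ^ (1 + α + (1 + α) ^ 2 / 2)) < 1 := by
  set β := 1 + α
  set u := x ^ (β / 2)
  have hβ : 0 < β := by linarith
  have hu0 : 0 < u := Real.rpow_pos_of_pos hx1 _
  have hu1 : u < 1 := Real.rpow_lt_one hx1.le hx2 (by positivity)
  have hlog : 0 < Real.log (1 / x) := Real.log_pos (one_lt_one_div hx1 hx2)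
  have hnum : β * u * Real.log (1 / x) = 2 * u * Real.log (1 / u) := by
    rw [one_div u, ← Real.inv_rpow hx1.le, Real.log_rpow (inv_pos.2 hx1), one_div]
    ring
  have hsq : u ^ 2 = x ^ β := by
    rw [← Real.rpow_natCast, ← Real.rpow_mul hx1.le]
    norm_num
  have hpow : x ^ (β + β ^ 2 / 2) < x ^ β :=
    Real.rpow_lt_rpow_of_exponent_gt hx1 hx2 (lt_add_of_pos_right _ (by positivity))
  have hden : 0 < 1 - x ^ (β + β ^ 2 / 2) := by
    linarith [Real.rpow_lt_one hx1.le hx2 (by positivity : 0 < β + β ^ 2 / 2)]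
  refine ⟨by positivity, (div_lt_one hden).2 ?_⟩
  linarith [two_mul_mul_log_one_div_le_one_sub_sq hu0 hu1.le]

/-- For `-1 < α < 0` and `0 < x < 1`,
`0 < (1+α)·x^{(1+α)/2}·log(1/x)/(1 - x^{1+α+(1+α)²/2}) < 1`. -/
theorem weight_quotient_bound (α x : ℝ) (hα1 : -1 < α) (hα2 : α < 0)
    (hx1 : 0 < x) (hx2 : x < 1) :
    0 < (1 + α) * x ^ ((1 + α) / 2) * Real.log (1 / x) /
        (1 - x ^ (1 + α + (1 + α) ^ 2 / 2)) ∧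
    (1 + α) * x ^ ((1 + α) / 2) * Real.log (1 / x) /
        (1 - x ^ (1 + α + (1 + α) ^ 2 / 2)) < 1 :=
  weight_quotient_bound_general α x hα1 hx1 hx2
end

section
/- Let s ≥ 0, let M be a positive integer with 2M ≥ s + 1, and let x ∈ ℝ with |x| < 2π. Then the series ∑_{m=M}^∞ (−1)^m·ζ(s − 2m)·x^{2m}/(2m)! and ∑_{m=M}^∞ (−1)^m·ζ(s − 2m − 1)·x^{2m+1}/(2m+1)! converge absolutely and satisfy |∑_{m=M}^∞ (−1)^m ζ(s − 2m) x^{2m}/(2m)!| ≤ 2·(2π)^{1+s−2M}·|sin(πs/2)|·ζ(2M + 1 − s)·x^{2M}/(4π² − x²) and |∑_{m=M}^∞ (−1)^m ζ(s − 2m − 1) x^{2m+1}/(2m+1)!| ≤ 2·(2π)^{s−2M}·|cos(πs/2)|·ζ(2M + 2 − s)·|x|^{2M+1}/(4π² − x²). -/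
open scoped Real

/-- The Riemann zeta function at real arguments. -/
noncomputable def realZeta (s : ℝ) : ℝ := (riemannZeta (s : ℂ)).re

private lemma rz_eq_tsum {w : ℝ} (hw : 1 < w) :
    riemannZeta (w : ℂ) = ((∑' n : ℕ, 1 / ((n : ℝ) + 1) ^ w : ℝ) : ℂ) := by
  rw [zeta_eq_tsum_one_div_nat_add_one_cpow (by simpa using hw), Complex.ofReal_tsum]
  congr 1; ext n
  rw [Complex.ofReal_div, Complex.ofReal_one, Complex.ofReal_cpow (by positivity)]
  push_cast
  ring

private lemma realZeta_eq {w : ℝ} (hw : 1 < w) :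
    realZeta w = ∑' n : ℕ, 1 / ((n : ℝ) + 1) ^ w := by
  rw [realZeta, rz_eq_tsum hw, Complex.ofReal_re]

private lemma summable_zeta_aux {w : ℝ} (hw : 1 < w) :
    Summable fun n : ℕ => 1 / ((n : ℝ) + 1) ^ w := by
  have h := (Real.summable_one_div_nat_rpow (p := w)).mpr hw
  have h2 := (summable_nat_add_iff 1).mpr h
  simpa using h2

private lemma realZeta_nonneg {w : ℝ} (hw : 1 < w) : 0 ≤ realZeta w := by
  rw [realZeta_eq hw]
  exact tsum_nonneg fun n => by positivity

private lemma realZeta_le {a b : ℝ} (ha : 1 < a) (hab : a ≤ b) : realZeta b ≤ realZeta a := by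
  rw [realZeta_eq ha, realZeta_eq (ha.trans_le hab)]
  refine Summable.tsum_le_tsum (fun n => ?_) (summable_zeta_aux (ha.trans_le hab)) (summable_zeta_aux ha)
  have h1 : (1 : ℝ) ≤ (n : ℝ) + 1 := by simp
  exact one_div_le_one_div_of_le (by positivity) (Real.rpow_le_rpow_of_exponent_le h1 hab)

private lemma realZeta_one_sub {w : ℝ} (hw : 2 ≤ w) :
    realZeta (1 - w) =
      2 * (2 * π) ^ (-w) * Real.Gamma w * Real.cos (π * w / 2) * realZeta w := by
  have hπ := Real.pi_pos
  have hw1 : (1 : ℝ) < w := by linarith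
  have h0 : ∀ n : ℕ, (w : ℂ) ≠ -n := by
    intro n h
    have h' : w = -(n : ℝ) := by exact_mod_cast h
    have : (0:ℝ) ≤ (n:ℝ) := n.cast_nonneg
    linarith
  have h1 : (w : ℂ) ≠ 1 := by
    intro h
    have : w = (1:ℝ) := by exact_mod_cast h
    linarith
  have key := riemannZeta_one_sub h0 h1
  have hz : riemannZeta (w : ℂ) = ((realZeta w : ℝ) : ℂ) := by
    rw [rz_eq_tsum hw1, realZeta_eq hw1]
  rw [hz] at key
  have hre : realZeta (1 - w) = (riemannZeta (1 - (w : ℂ))).re := by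
    rw [realZeta]; norm_cast
  rw [hre, key]
  rw [show ((2 : ℂ) * ↑π) = ((2 * π : ℝ) : ℂ) by push_cast; ring,
      show (-(w : ℂ)) = ((-w : ℝ) : ℂ) by push_cast; ring,
      ← Complex.ofReal_cpow (by positivity),
      show ((π : ℂ) * ↑w / 2) = ((π * w / 2 : ℝ) : ℂ) by push_cast; ring,
      ← Complex.ofReal_cos, Complex.Gamma_ofReal]
  norm_cast

private lemma tail_bound {f : ℕ → ℝ} {C q : ℝ} (hq0 : 0 ≤ q) (hq1 : q < 1)
    (hf : ∀ m, |f m| ≤ C * q ^ m) :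
    Summable (fun m => |f m|) ∧ |∑' m, f m| ≤ C / (1 - q) := by
  have hg : Summable (fun m : ℕ => C * q ^ m) :=
    (summable_geometric_of_lt_one hq0 hq1).mul_left C
  have hs : Summable fun m => |f m| :=
    hg.of_nonneg_of_le (fun m => abs_nonneg _) hf
  refine ⟨hs, ?_⟩
  calc |∑' m, f m| ≤ ∑' m, |f m| := by
        have := norm_tsum_le_tsum_norm (f := f) (by simpa using hs)
        simpa using this
    _ ≤ ∑' m : ℕ, C * q ^ m := Summable.tsum_le_tsum hf hs hg
    _ = C / (1 - q) := by
        rw [tsum_mul_left, tsum_geometric_of_lt_one hq0 hq1, div_eq_mul_inv]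

/-- Tail bounds for the asymptotic expansions at `x = 0` of the Clausen functions
`C_s` and `S_s`. -/
theorem clausen_tail_bounds (s : ℝ) (M : ℕ) (x : ℝ)
    (hs : 0 ≤ s) (hM : 0 < M) (hM2 : s + 1 ≤ 2 * (M : ℝ)) (hx : |x| < 2 * π) :
    Summable (fun m : ℕ =>
      |(-1 : ℝ) ^ (m + M) * realZeta (s - 2 * ((m + M : ℕ) : ℝ)) * x ^ (2 * (m + M)) /
        (Nat.factorial (2 * (m + M)) : ℝ)|) ∧
    Summable (fun m : ℕ =>
      |(-1 : ℝ) ^ (m + M) * realZeta (s - 2 * ((m + M : ℕ) : ℝ) - 1) * x ^ (2 * (m + M) + 1) /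
        (Nat.factorial (2 * (m + M) + 1) : ℝ)|) ∧
    |∑' m : ℕ, (-1 : ℝ) ^ (m + M) * realZeta (s - 2 * ((m + M : ℕ) : ℝ)) * x ^ (2 * (m + M)) /
        (Nat.factorial (2 * (m + M)) : ℝ)| ≤
      2 * (2 * π) ^ (1 + s - 2 * (M : ℝ)) * |Real.sin (π * s / 2)| *
        realZeta (2 * (M : ℝ) + 1 - s) * x ^ (2 * M) / (4 * π ^ 2 - x ^ 2) ∧
    |∑' m : ℕ, (-1 : ℝ) ^ (m + M) * realZeta (s - 2 * ((m + M : ℕ) : ℝ) - 1) *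
        x ^ (2 * (m + M) + 1) / (Nat.factorial (2 * (m + M) + 1) : ℝ)| ≤
      2 * (2 * π) ^ (s - 2 * (M : ℝ)) * |Real.cos (π * s / 2)| *
        realZeta (2 * (M : ℝ) + 2 - s) * |x| ^ (2 * M + 1) / (4 * π ^ 2 - x ^ 2) := by
  have hπ := Real.pi_pos
  have h2π : (0:ℝ) < 2 * π := by linarith
  have hM1 : (1:ℝ) ≤ (M:ℝ) := by exact_mod_cast hM
  have hZM1 : (1:ℝ) < 2*(M:ℝ)+1-s := by linarith
  have hZM2 : (1:ℝ) < 2*(M:ℝ)+2-s := by linarith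
  set q : ℝ := x ^ 2 / (2*π) ^ 2 with hqdef
  have hq0 : 0 ≤ q := by positivity
  have hxx : x^2 < (2*π)^2 := by
    calc x^2 = |x|^2 := (sq_abs x).symm
      _ < (2*π)^2 := pow_lt_pow_left₀ hx (abs_nonneg x) two_ne_zero
  have hq1 : q < 1 := (div_lt_one (by positivity)).mpr hxx
  have hden : (0:ℝ) < 4*π^2 - x^2 := by nlinarith
  have h1q : 1 - q = (4*π^2 - x^2)/(4*π^2) := by
    rw [hqdef]; field_simp; ring
  have hB : (2*π:ℝ) ^ ((-2):ℝ) = ((2*π)^2)⁻¹ := by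
    rw [show ((-2):ℝ) = -((2:ℕ):ℝ) by norm_num, Real.rpow_neg h2π.le, Real.rpow_natCast]
  have hqx : q = x^2 * (2*π) ^ ((-2):ℝ) := by
    rw [hB, hqdef, div_eq_mul_inv]
  set S := Real.sin (π * s / 2) with hS
  set S' := Real.cos (π * s / 2) with hS'
  set ZM := realZeta (2*(M:ℝ)+1-s) with hZM
  set ZM' := realZeta (2*(M:ℝ)+2-s) with hZM'
  have hZMnn : 0 ≤ ZM := realZeta_nonneg hZM1
  have hZMnn' : 0 ≤ ZM' := realZeta_nonneg hZM2
  have hx2M : (0:ℝ) ≤ x ^ (2*M) := by rw [pow_mul]; positivity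
  set Ce := 2 * (2*π) ^ (s-2*(M:ℝ)-1) * |S| * ZM * x ^ (2*M) with hCe
  set Co := 2 * (2*π) ^ (s-2*(M:ℝ)-2) * |S'| * ZM' * |x| ^ (2*M+1) with hCo
  -- even pointwise bound
  have heven : ∀ m : ℕ,
      |(-1 : ℝ) ^ (m + M) * realZeta (s - 2 * ((m + M : ℕ) : ℝ)) * x ^ (2 * (m + M)) /
        (Nat.factorial (2 * (m + M)) : ℝ)| ≤ Ce * q ^ m := by
    intro m
    set k := m + M with hk
    have hkM : (M:ℝ) ≤ (k:ℝ) := by exact_mod_cast Nat.le_add_left M m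
    set w : ℝ := 2*(k:ℝ)+1-s with hwdef
    have hw2 : (2:ℝ) ≤ w := by rw [hwdef]; linarith
    have hw1 : (1:ℝ) < w := by linarith
    have hone : s - 2*((k:ℕ):ℝ) = 1 - w := by rw [hwdef]; push_cast; ring
    have hcos : Real.cos (π * w / 2) = (-1:ℝ)^k * S := by
      rw [show π * w / 2 = (π/2 - π*s/2) + (k:ℝ)*π by rw [hwdef]; ring,
          Real.cos_add_nat_mul_pi, Real.cos_pi_div_two_sub, hS]
    have hval : realZeta (s - 2*((k:ℕ):ℝ)) =
        2 * (2*π)^(-w) * Real.Gamma w * ((-1:ℝ)^k * S) * realZeta w := by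
      rw [hone, realZeta_one_sub hw2, hcos]
    have hkk1 : ((-1:ℝ)^k) * ((-1:ℝ)^k) = 1 := by
      rw [← pow_add]; exact Even.neg_one_pow ⟨k, rfl⟩
    have hF : (0:ℝ) < (Nat.factorial (2*k) : ℝ) := by exact_mod_cast (Nat.factorial_pos _)
    have hterm : (-1 : ℝ) ^ k * realZeta (s - 2 * ((k : ℕ) : ℝ)) * x ^ (2 * k) /
        (Nat.factorial (2 * k) : ℝ)
        = S * (2 * (2*π)^(-w) * Real.Gamma w * realZeta w * x^(2*k) /
            (Nat.factorial (2*k) : ℝ)) := by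
      rw [hval]
      linear_combination (2 * (2*π)^(-w) * Real.Gamma w * realZeta w * S * x^(2*k) /
        (Nat.factorial (2*k) : ℝ)) * hkk1
    have hx2k : (0:ℝ) ≤ x^(2*k) := by rw [pow_mul]; positivity
    have hG : 0 < Real.Gamma w := Real.Gamma_pos_of_pos (by linarith)
    have hZw : 0 ≤ realZeta w := realZeta_nonneg hw1
    have hPnn : 0 ≤ 2 * (2*π)^(-w) * Real.Gamma w * realZeta w * x^(2*k) /
        (Nat.factorial (2*k) : ℝ) :=
      div_nonneg (mul_nonneg (mul_nonneg (mul_nonneg (by positivity) hG.le) hZw) hx2k) hF.le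
    have hGF : Real.Gamma w ≤ (Nat.factorial (2*k) : ℝ) := by
      calc Real.Gamma w ≤ Real.Gamma (((2*k:ℕ):ℝ) + 1) := by
            apply Real.Gamma_strictMonoOn_Ici.monotoneOn hw2 ?_ ?_
            · simp only [Set.mem_Ici]; push_cast; linarith
            · push_cast; rw [hwdef]; push_cast [hk]; linarith
        _ = (Nat.factorial (2*k) : ℝ) := Real.Gamma_nat_eq_factorial _
    have hZle : realZeta w ≤ ZM := realZeta_le hZM1 (by rw [hwdef]; linarith)
    have hApow : (2*π:ℝ)^(-w) = (2*π)^(s-2*(M:ℝ)-1) * ((2*π)^((-2):ℝ))^m := by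
      rw [← Real.rpow_natCast ((2*π)^((-2):ℝ)) m, ← Real.rpow_mul h2π.le,
        ← Real.rpow_add h2π]
      congr 1
      rw [hwdef, hk]; push_cast; ring
    have hxpow : x^(2*k) = x^(2*M) * (x^2)^m := by
      rw [← pow_mul, ← pow_add]; congr 1; rw [hk]; ring
    have hqm : q^m = (x^2)^m * ((2*π)^((-2):ℝ))^m := by
      rw [← mul_pow, ← hqx]
    have hPle : 2 * (2*π)^(-w) * Real.Gamma w * realZeta w * x^(2*k) /
        (Nat.factorial (2*k) : ℝ) ≤ 2*(2*π)^(s-2*(M:ℝ)-1) * ZM * x^(2*M) * q^m := by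
      calc 2 * (2*π)^(-w) * Real.Gamma w * realZeta w * x^(2*k) /
            (Nat.factorial (2*k) : ℝ)
          = (2*(2*π)^(-w) * x^(2*k) * realZeta w) * (Real.Gamma w /
            (Nat.factorial (2*k) : ℝ)) := by ring
        _ ≤ (2*(2*π)^(-w) * x^(2*k) * realZeta w) * 1 :=
            mul_le_mul_of_nonneg_left ((div_le_one hF).mpr hGF)
              (mul_nonneg (mul_nonneg (by positivity) hx2k) hZw)
        _ = (2*(2*π)^(-w) * x^(2*k)) * realZeta w := by ring
        _ ≤ (2*(2*π)^(-w) * x^(2*k)) * ZM :=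
            mul_le_mul_of_nonneg_left hZle (mul_nonneg (by positivity) hx2k)
        _ = 2*(2*π)^(s-2*(M:ℝ)-1) * ZM * x^(2*M) * q^m := by
            rw [hApow, hxpow, hqm]; ring
    calc |(-1 : ℝ) ^ k * realZeta (s - 2 * ((k : ℕ) : ℝ)) * x ^ (2 * k) /
          (Nat.factorial (2 * k) : ℝ)|
        = |S| * (2 * (2*π)^(-w) * Real.Gamma w * realZeta w * x^(2*k) /
            (Nat.factorial (2*k) : ℝ)) := by
          rw [hterm, abs_mul, abs_of_nonneg hPnn]
      _ ≤ |S| * (2*(2*π)^(s-2*(M:ℝ)-1) * ZM * x^(2*M) * q^m) :=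
          mul_le_mul_of_nonneg_left hPle (abs_nonneg _)
      _ = Ce * q^m := by rw [hCe]; ring
  -- odd pointwise bound
  have hodd : ∀ m : ℕ,
      |(-1 : ℝ) ^ (m + M) * realZeta (s - 2 * ((m + M : ℕ) : ℝ) - 1) * x ^ (2 * (m + M) + 1) /
        (Nat.factorial (2 * (m + M) + 1) : ℝ)| ≤ Co * q ^ m := by
    intro m
    set k := m + M with hk
    have hkM : (M:ℝ) ≤ (k:ℝ) := by exact_mod_cast Nat.le_add_left M m
    set w : ℝ := 2*(k:ℝ)+2-s with hwdef
    have hw2 : (2:ℝ) ≤ w := by rw [hwdef]; linarith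
    have hw1 : (1:ℝ) < w := by linarith
    have hone : s - 2*((k:ℕ):ℝ) - 1 = 1 - w := by rw [hwdef]; push_cast; ring
    have hcos : Real.cos (π * w / 2) = (-1:ℝ)^k * (-S') := by
      rw [show π * w / 2 = (π - π*s/2) + (k:ℝ)*π by rw [hwdef]; ring,
          Real.cos_add_nat_mul_pi, Real.cos_pi_sub, hS']
    have hval : realZeta (s - 2*((k:ℕ):ℝ) - 1) =
        2 * (2*π)^(-w) * Real.Gamma w * ((-1:ℝ)^k * (-S')) * realZeta w := by
      rw [hone, realZeta_one_sub hw2, hcos]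
    have hkk1 : ((-1:ℝ)^k) * ((-1:ℝ)^k) = 1 := by
      rw [← pow_add]; exact Even.neg_one_pow ⟨k, rfl⟩
    have hF : (0:ℝ) < (Nat.factorial (2*k+1) : ℝ) := by exact_mod_cast (Nat.factorial_pos _)
    have hterm : (-1 : ℝ) ^ k * realZeta (s - 2 * ((k : ℕ) : ℝ) - 1) * x ^ (2 * k + 1) /
        (Nat.factorial (2 * k + 1) : ℝ)
        = (-S') * (2 * (2*π)^(-w) * Real.Gamma w * realZeta w * x^(2*k+1) /
            (Nat.factorial (2*k+1) : ℝ)) := by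
      rw [hval]
      linear_combination (-(2 * (2*π)^(-w) * Real.Gamma w * realZeta w * S' * x^(2*k+1) /
        (Nat.factorial (2*k+1) : ℝ))) * hkk1
    have hG : 0 < Real.Gamma w := Real.Gamma_pos_of_pos (by linarith)
    have hZw : 0 ≤ realZeta w := realZeta_nonneg hw1
    have hGF : Real.Gamma w ≤ (Nat.factorial (2*k+1) : ℝ) := by
      calc Real.Gamma w ≤ Real.Gamma (((2*k+1:ℕ):ℝ) + 1) := by
            apply Real.Gamma_strictMonoOn_Ici.monotoneOn hw2 ?_ ?_
            · simp only [Set.mem_Ici]; push_cast; linarith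
            · push_cast; rw [hwdef]; push_cast [hk]; linarith
        _ = (Nat.factorial (2*k+1) : ℝ) := Real.Gamma_nat_eq_factorial _
    have hZle : realZeta w ≤ ZM' := realZeta_le hZM2 (by rw [hwdef]; linarith)
    have hApow : (2*π:ℝ)^(-w) = (2*π)^(s-2*(M:ℝ)-2) * ((2*π)^((-2):ℝ))^m := by
      rw [← Real.rpow_natCast ((2*π)^((-2):ℝ)) m, ← Real.rpow_mul h2π.le,
        ← Real.rpow_add h2π]
      congr 1
      rw [hwdef, hk]; push_cast; ring
    have hxpow : |x|^(2*k+1) = |x|^(2*M+1) * (x^2)^m := by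
      rw [← sq_abs x, ← pow_mul, ← pow_add]; congr 1; rw [hk]; ring
    have hqm : q^m = (x^2)^m * ((2*π)^((-2):ℝ))^m := by
      rw [← mul_pow, ← hqx]
    have habs : |2 * (2*π)^(-w) * Real.Gamma w * realZeta w * x^(2*k+1) /
        (Nat.factorial (2*k+1) : ℝ)|
        = 2 * (2*π)^(-w) * Real.Gamma w * realZeta w * |x|^(2*k+1) /
        (Nat.factorial (2*k+1) : ℝ) := by
      rw [abs_div, abs_mul, abs_mul, abs_mul, abs_pow,
        abs_of_nonneg (by positivity : (0:ℝ) ≤ 2 * (2*π)^(-w)),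
        abs_of_nonneg hG.le, abs_of_nonneg hZw, abs_of_nonneg hF.le]
    have hPle : 2 * (2*π)^(-w) * Real.Gamma w * realZeta w * |x|^(2*k+1) /
        (Nat.factorial (2*k+1) : ℝ) ≤ 2*(2*π)^(s-2*(M:ℝ)-2) * ZM' * |x|^(2*M+1) * q^m := by
      calc 2 * (2*π)^(-w) * Real.Gamma w * realZeta w * |x|^(2*k+1) /
            (Nat.factorial (2*k+1) : ℝ)
          = (2*(2*π)^(-w) * |x|^(2*k+1) * realZeta w) * (Real.Gamma w /
            (Nat.factorial (2*k+1) : ℝ)) := by ring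
        _ ≤ (2*(2*π)^(-w) * |x|^(2*k+1) * realZeta w) * 1 :=
            mul_le_mul_of_nonneg_left ((div_le_one hF).mpr hGF)
              (mul_nonneg (by positivity) hZw)
        _ = (2*(2*π)^(-w) * |x|^(2*k+1)) * realZeta w := by ring
        _ ≤ (2*(2*π)^(-w) * |x|^(2*k+1)) * ZM' :=
            mul_le_mul_of_nonneg_left hZle (by positivity)
        _ = 2*(2*π)^(s-2*(M:ℝ)-2) * ZM' * |x|^(2*M+1) * q^m := by
            rw [hApow, hxpow, hqm]; ring
    calc |(-1 : ℝ) ^ k * realZeta (s - 2 * ((k : ℕ) : ℝ) - 1) * x ^ (2 * k + 1) /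
          (Nat.factorial (2 * k + 1) : ℝ)|
        = |S'| * (2 * (2*π)^(-w) * Real.Gamma w * realZeta w * |x|^(2*k+1) /
            (Nat.factorial (2*k+1) : ℝ)) := by
          rw [hterm, abs_mul, abs_neg, habs]
      _ ≤ |S'| * (2*(2*π)^(s-2*(M:ℝ)-2) * ZM' * |x|^(2*M+1) * q^m) :=
          mul_le_mul_of_nonneg_left hPle (abs_nonneg _)
      _ = Co * q^m := by rw [hCo]; ring
  obtain ⟨hsum_e, hbd_e⟩ := tail_bound hq0 hq1 heven
  obtain ⟨hsum_o, hbd_o⟩ := tail_bound hq0 hq1 hodd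
  have hpw : (2*π:ℝ)^(s-2*(M:ℝ)-1) * (4*π^2) = (2*π)^(1+s-2*(M:ℝ)) := by
    rw [show (1+s-2*(M:ℝ)) = (s-2*(M:ℝ)-1) + ((2:ℕ):ℝ) by push_cast; ring,
      Real.rpow_add h2π, Real.rpow_natCast]
    ring
  have hpw' : (2*π:ℝ)^(s-2*(M:ℝ)-2) * (4*π^2) = (2*π)^(s-2*(M:ℝ)) := by
    rw [show (s-2*(M:ℝ)) = (s-2*(M:ℝ)-2) + ((2:ℕ):ℝ) by push_cast; ring,
      Real.rpow_add h2π, Real.rpow_natCast]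
    ring
  have hEe : Ce / (1 - q) = 2 * (2 * π) ^ (1 + s - 2 * (M : ℝ)) * |S| * ZM * x ^ (2 * M) /
      (4 * π ^ 2 - x ^ 2) := by
    rw [h1q, hCe, ← hpw, div_div_eq_mul_div]
    ring
  have hEo : Co / (1 - q) = 2 * (2 * π) ^ (s - 2 * (M : ℝ)) * |S'| * ZM' * |x| ^ (2 * M + 1) /
      (4 * π ^ 2 - x ^ 2) := by
    rw [h1q, hCo, ← hpw', div_div_eq_mul_div]
    ring
  exact ⟨hsum_e, hsum_o, hEe ▸ hbd_e, hEo ▸ hbd_o⟩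
end

section
/- Let α ∈ (−1, 0), let x be a real number with 0 < x < 1/π³, and let D be any real number with |D| ≤ log(1 + 2eπ). Then (1/(1 − x^{1+α+(1+α)²/2}))·(1/log(1/x))·((4 + 2α)/3)·((D − log x − (2/3)·(1/(1+α)))·(1 − (x/π)^{(3/2)(1+α)}) + log(π/x)·(x/π)^{(3/2)(1+α)}) ≤ ((4 + 2α)/3)·(2·log(1 + 2eπ)/log(1/x) + 1). -/
open scoped Real
open Set

set_option maxHeartbeats 1000000 in
/-- Bound on the main term `G_{α,2,M}(x)` in the estimate of the weighted integral
operator norm, for `α ∈ (-1,0)`, `0 < x < 1/π³` and `|D| ≤ log(1+2eπ)`. -/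
theorem G2M_bound (α x D : ℝ) (hα : α ∈ Set.Ioo (-1 : ℝ) 0)
    (hx1 : 0 < x) (hx2 : x < 1 / π ^ 3)
    (hD : |D| ≤ Real.log (1 + 2 * Real.exp 1 * π)) :
    (1 / (1 - x ^ (1 + α + (1 + α) ^ 2 / 2))) * (1 / Real.log (1 / x)) * ((4 + 2 * α) / 3) *
      ((D - Real.log x - 2 / 3 * (1 / (1 + α))) * (1 - (x / π) ^ (3 / 2 * (1 + α)))
        + Real.log (π / x) * (x / π) ^ (3 / 2 * (1 + α))) ≤
    (4 + 2 * α) / 3 * (2 * Real.log (1 + 2 * Real.exp 1 * π) / Real.log (1 / x) + 1) := by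
  obtain ⟨hα1, hα2⟩ := hα
  have hπ0 : (0:ℝ) < π := Real.pi_pos
  have hπ1 : (1:ℝ) < π := by nlinarith [Real.pi_gt_three]
  set b := 1 + α with hbdef
  have hb : 0 < b := by rw [hbdef]; linarith
  have hb1 : b ≤ 1 := by rw [hbdef]; linarith
  set P := Real.log π with hPdef
  set K := Real.log (1 + 2 * Real.exp 1 * π) with hKdef
  set A := Real.log x with hAdef
  clear_value b P K A
  have hP : 0 < P := by rw [hPdef]; exact Real.log_pos hπ1
  have hA3 : A ≤ -(3 * P) := by
    have h1 : Real.log x ≤ Real.log (1 / π ^ 3) := Real.log_le_log hx1 hx2.le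
    rw [one_div, Real.log_inv, Real.log_pow] at h1
    push_cast at h1
    rw [hAdef, hPdef]; linarith
  have hA0 : A < 0 := by linarith
  have hKP : P ≤ K := by
    rw [hKdef, hPdef]
    apply Real.log_le_log hπ0
    nlinarith [Real.exp_one_gt_d9]
  have hK0 : 0 < K := lt_of_lt_of_le hP hKP
  have hDK : D ≤ K := le_trans (le_abs_self D) hD
  -- rewrite logs and rpows
  have hE1 : x ^ (b + b ^ 2 / 2) = Real.exp (A * (b + b ^ 2 / 2)) := by
    rw [hAdef]; exact Real.rpow_def_of_pos hx1 _
  have hE2 : (x / π) ^ (3 / 2 * b) = Real.exp ((A - P) * (3 / 2 * b)) := by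
    rw [hAdef, hPdef, Real.rpow_def_of_pos (div_pos hx1 hπ0), Real.log_div (ne_of_gt hx1) (ne_of_gt hπ0)]
  have hlog1x : Real.log (1 / x) = -A := by rw [hAdef, one_div, Real.log_inv]
  have hlogπx : Real.log (π / x) = P - A := by
    rw [hAdef, hPdef]; exact Real.log_div (ne_of_gt hπ0) (ne_of_gt hx1)
  rw [hE1, hE2, hlog1x, hlogπx]
  -- abbreviations for the two exponents
  set a1 := A * (b + b ^ 2 / 2) with ha1
  set a2 := (A - P) * (3 / 2 * b) with ha2
  clear_value a1 a2
  have ha1neg : a1 < 0 := by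
    rw [ha1]; apply mul_neg_of_neg_of_pos hA0; nlinarith
  have ha2neg : a2 < 0 := by
    rw [ha2]; apply mul_neg_of_neg_of_pos (by linarith); nlinarith
  have hE1pos : 0 < Real.exp a1 := Real.exp_pos _
  have hE2pos : 0 < Real.exp a2 := Real.exp_pos _
  have hE1lt1 : Real.exp a1 < 1 := Real.exp_lt_one_iff.mpr ha1neg
  have hE2lt1 : Real.exp a2 < 1 := Real.exp_lt_one_iff.mpr ha2neg
  -- a2 ≤ a1 (i.e. z ≤ y)
  have ha21 : a2 ≤ a1 := by
    rw [ha1, ha2]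
    nlinarith [mul_nonneg hb.le hP.le, mul_nonneg (mul_nonneg (by linarith : (0:ℝ) ≤ -A) hb.le) (by linarith : (0:ℝ) ≤ 1 - b)]
  -- 2*a1 ≤ a2 (i.e. y ≤ 2z, so that -a1 ≥ (-a2)/2)
  have ha12 : 2 * a1 ≤ a2 := by
    rw [ha1, ha2]
    nlinarith [mul_nonneg hb.le (by linarith : (0:ℝ) ≤ -A - 3*P), mul_nonneg (mul_nonneg hb.le hb.le) (by linarith : (0:ℝ) ≤ -A)]
  -- Claim 1 : (P - A) * exp a1 ≤ 2/3 * (1/b) * (1 - exp a2)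
  have c1 : (P - A) * Real.exp a1 ≤ 2 / 3 * (1 / b) * (1 - Real.exp a2) := by
    set y := -a2 with hy
    clear_value y
    have hy0 : 0 < y := by rw [hy]; linarith
    have hs : y / 2 < Real.sinh (y / 2) := Real.self_lt_sinh_iff.mpr (by linarith)
    rw [Real.sinh_eq] at hs
    have h7 : y ≤ Real.exp (y/2) - Real.exp (-(y/2)) := by linarith
    have e1 : Real.exp (y/2) * Real.exp (-(y/2)) = 1 := by
      rw [← Real.exp_add, add_neg_cancel, Real.exp_zero]
    have e2 : Real.exp (-(y/2)) * Real.exp (-(y/2)) = Real.exp a2 := by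
      rw [← Real.exp_add]; congr 1; rw [hy]; ring
    have h8 : y * Real.exp (-(y/2)) ≤ 1 - Real.exp a2 := by
      have := mul_le_mul_of_nonneg_right h7 (Real.exp_pos (-(y/2))).le
      nlinarith [this, e1, e2]
    have h9 : Real.exp a1 ≤ Real.exp (-(y/2)) := by
      apply Real.exp_le_exp.mpr; rw [hy]; linarith
    have h10 : y * Real.exp a1 ≤ 1 - Real.exp a2 := by
      calc y * Real.exp a1 ≤ y * Real.exp (-(y/2)) :=
            mul_le_mul_of_nonneg_left h9 hy0.le
        _ ≤ 1 - Real.exp a2 := h8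
    have h11 := mul_le_mul_of_nonneg_left h10 (by positivity : (0:ℝ) ≤ 2/3 * (1/b))
    have harg : 2/3 * (1/b) * (y * Real.exp a1) = (P - A) * Real.exp a1 := by
      rw [hy, ha2]; field_simp; ring
    linarith [harg ▸ h11]
  -- Claim 2 : (K - P) * (exp a1 - exp a2) ≤ K * (1 - exp a1)
  have c2 : (K - P) * (Real.exp a1 - Real.exp a2) ≤ K * (1 - Real.exp a1) := by
    have d1 : Real.exp a1 - Real.exp a2 ≤ (a1 - a2) * Real.exp a1 := by
      have h := Real.add_one_le_exp (a2 - a1)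
      have h2 := mul_le_mul_of_nonneg_left h hE1pos.le
      rw [← Real.exp_add] at h2
      have h3 : a1 + (a2 - a1) = a2 := by ring
      rw [h3] at h2
      nlinarith [h2]
    have d2 : (-a1) * Real.exp a1 ≤ 1 - Real.exp a1 := by
      have h := Real.add_one_le_exp (-a1)
      have h2 := mul_le_mul_of_nonneg_right h hE1pos.le
      rw [← Real.exp_add] at h2
      simp at h2
      nlinarith [h2]
    have d3 : (K - P) * (a1 - a2) ≤ K * (-a1) := by
      rw [ha1, ha2]
      nlinarith [mul_nonneg hb.le (mul_nonneg (by linarith : (0:ℝ) ≤ -A - 3*P)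
          (by nlinarith [mul_nonneg hb.le (by linarith : (0:ℝ) ≤ 2*K - P)] : (0:ℝ) ≤ K + P + 2*b*K - b*P)),
        mul_nonneg hb.le (mul_nonneg hP.le
          (by nlinarith [mul_nonneg hb.le (by linarith : (0:ℝ) ≤ 2*K - P)] : (0:ℝ) ≤ 2*P + b*(2*K - P)))]
    have d4 : (K - P) * (Real.exp a1 - Real.exp a2) ≤ (K - P) * ((a1 - a2) * Real.exp a1) :=
      mul_le_mul_of_nonneg_left d1 (by linarith)
    have d5 : (K - P) * (a1 - a2) * Real.exp a1 ≤ K * (-a1) * Real.exp a1 :=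
      mul_le_mul_of_nonneg_right d3 hE1pos.le
    have d6 : K * ((-a1) * Real.exp a1) ≤ K * (1 - Real.exp a1) :=
      mul_le_mul_of_nonneg_left d2 hK0.le
    nlinarith [d4, d5, d6]
  -- key inequality
  have hf1 : 0 ≤ (K - D) * (1 - Real.exp a2) :=
    mul_nonneg (by linarith) (by linarith)
  have key : (D - A - 2 / 3 * (1 / b)) * (1 - Real.exp a2) + (P - A) * Real.exp a2
      ≤ (1 - Real.exp a1) * (2 * K - A) := by
    nlinarith [hf1, c1, c2]
  -- final assembly
  have h1E1 : 0 < 1 - Real.exp a1 := by linarith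
  have hnA : 0 < -A := by linarith
  have hc : (0:ℝ) ≤ (4 + 2 * α) / 3 := by rw [hbdef] at hb; linarith
  have hw : 0 ≤ 1 / (1 - Real.exp a1) * (1 / -A) * ((4 + 2 * α) / 3) :=
    mul_nonneg (mul_nonneg (le_of_lt (div_pos one_pos h1E1)) (le_of_lt (div_pos one_pos hnA))) hc
  calc 1 / (1 - Real.exp a1) * (1 / -A) * ((4 + 2 * α) / 3) *
        ((D - A - 2 / 3 * (1 / b)) * (1 - Real.exp a2) + (P - A) * Real.exp a2)
      ≤ 1 / (1 - Real.exp a1) * (1 / -A) * ((4 + 2 * α) / 3) *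
        ((1 - Real.exp a1) * (2 * K - A)) := mul_le_mul_of_nonneg_left key hw
    _ = (4 + 2 * α) / 3 * (2 * K / -A + 1) := by
        have hne1 : (1 : ℝ) - Real.exp a1 ≠ 0 := ne_of_gt h1E1
        have hne2 : A ≠ 0 := ne_of_lt hA0
        field_simp
        ring
end

section
/- Let h₁(t) := log(t − 1) + log(t + 1) − 2·log(t) + 1/t². Then h₁(t) < 0 for every t > 1, the improper integral ∫₁^∞ (−h₁(t))·t dt equals 1/2, and consequently for every b > 1 one has ∫₁^b |h₁(t)|·t dt ≤ 1/2. -/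
/-!
For `t > 1`, `h₁(t) = log (1 - 1/t²) + 1/t²`, which is negative because `log x < x - 1`.
The function `F(t) = ((t² - 1) log (t² / (t² - 1)) - 1) / 2` is a primitive of `-h₁(t)·t` on
`(1, ∞)`; it is continuous at `1` with `F(1) = -1/2` (as `x log x → 0`) and tends to `0` at
infinity (as `x log (1 + 1/x) → 1`). Since the integrand is nonnegative, the fundamental theorem
of calculus on `(1, ∞)` gives integrability and the value `0 - F(1) = 1/2`, and every
`∫₁^b |h₁(t)|·t dt` is bounded by the integral over the whole half-line.
-/

open Set MeasureTheory Filter Topology Real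

noncomputable def h₁ (t : ℝ) : ℝ :=
  log (t - 1) + log (t + 1) - 2 * log t + 1 / t ^ 2

noncomputable def h₁Primitive (t : ℝ) : ℝ :=
  ((t ^ 2 - 1) * log (t ^ 2) - (t ^ 2 - 1) * log (t ^ 2 - 1) - 1) / 2

lemma log_sub_one_add_log_add_one {t : ℝ} (ht : 1 < t) :
    log (t - 1) + log (t + 1) = log (t ^ 2 - 1) := by
  rw [← log_mul (by linarith) (by linarith)]
  ring_nf

lemma h₁_eq_log_one_sub_add {t : ℝ} (ht : 1 < t) :
    h₁ t = log (1 - 1 / t ^ 2) + 1 / t ^ 2 := by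
  have ht2 : 0 < t ^ 2 - 1 := by nlinarith
  have hsplit : 1 - 1 / t ^ 2 = (t ^ 2 - 1) / t ^ 2 := by field_simp
  rw [h₁, log_sub_one_add_log_add_one ht, hsplit, log_div ht2.ne' (by positivity), log_pow]
  push_cast
  ring

lemma h₁_neg {t : ℝ} (ht : 1 < t) : h₁ t < 0 := by
  have hu : 0 < 1 / t ^ 2 := by positivity
  have hu1 : 1 / t ^ 2 < 1 := by rw [div_lt_one (by positivity)]; nlinarith
  have := log_lt_sub_one_of_pos (by linarith : 0 < 1 - 1 / t ^ 2) (by linarith)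
  rw [h₁_eq_log_one_sub_add ht]
  linarith

lemma hasDerivAt_h₁Primitive {t : ℝ} (ht : 1 < t) :
    HasDerivAt h₁Primitive (-h₁ t * t) t := by
  have ht0 : t ≠ 0 := by positivity
  have ht2 : t ^ 2 - 1 ≠ 0 := by nlinarith
  have hsq : HasDerivAt (fun s : ℝ => s ^ 2 - 1) (2 * t) t := by
    simpa using (hasDerivAt_pow 2 t).sub_const 1
  have hsq' : HasDerivAt (fun s : ℝ => s ^ 2) (2 * t) t := by simpa using hasDerivAt_pow 2 t
  have hF := (((hsq.mul (hsq'.log (pow_ne_zero 2 ht0))).sub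
    (hsq.mul (hsq.log ht2))).sub_const 1).div_const 2
  refine hF.congr_deriv ?_
  rw [h₁, log_sub_one_add_log_add_one ht, log_pow]
  field_simp
  ring

lemma continuousAt_h₁Primitive_one : ContinuousAt h₁Primitive 1 := by
  have hsq : Continuous fun s : ℝ => s ^ 2 - 1 := by fun_prop
  have hlog : ContinuousAt (fun s : ℝ => log (s ^ 2)) 1 :=
    (continuousAt_log (by norm_num)).comp (continuous_pow 2).continuousAt
  exact (((hsq.continuousAt.mul hlog).sub
    (continuous_mul_log.comp hsq).continuousAt).sub continuousAt_const).div_const 2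

lemma h₁Primitive_one : h₁Primitive 1 = -1 / 2 := by
  norm_num [h₁Primitive]

lemma tendsto_h₁Primitive_atTop : Tendsto h₁Primitive atTop (𝓝 0) := by
  have hsq : Tendsto (fun t : ℝ => t ^ 2 - 1) atTop atTop :=
    tendsto_atTop_add_const_right _ _ (tendsto_pow_atTop two_ne_zero)
  have hlim := (((tendsto_mul_log_one_add_div_atTop 1).comp hsq).sub_const 1).div_const 2
  rw [sub_self, zero_div] at hlim
  refine hlim.congr' ?_
  filter_upwards [eventually_gt_atTop 1] with t ht
  have ht2 : 0 < t ^ 2 - 1 := by nlinarith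
  have hsplit : 1 + 1 / (t ^ 2 - 1) = t ^ 2 / (t ^ 2 - 1) := by field_simp; ring
  simp only [Function.comp_apply, h₁Primitive]
  rw [hsplit, log_div (by positivity) ht2.ne']
  ring

lemma intervalIntegral_le_integral_Ioi_of_nonneg {f : ℝ → ℝ} {a b : ℝ} (hab : a ≤ b)
    (hf : IntegrableOn f (Ioi a)) (hf0 : ∀ x ∈ Ioi a, 0 ≤ f x) :
    ∫ x in a..b, f x ≤ ∫ x in Ioi a, f x := by
  rw [intervalIntegral.integral_of_le hab]
  exact setIntegral_mono_set hf ((ae_restrict_mem measurableSet_Ioi).mono hf0)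
    Ioc_subset_Ioi_self.eventuallyLE

/-- `h₁(t) = log(t-1) + log(t+1) - 2 log t + 1/t²` is negative for `t > 1`, the improper
integral `∫₁^∞ (-h₁(t))·t dt` equals `1/2`, and hence `∫₁^b |h₁(t)|·t dt ≤ 1/2` for `b > 1`. -/
theorem h1_integral_bound :
    (∀ t : ℝ, 1 < t →
      Real.log (t - 1) + Real.log (t + 1) - 2 * Real.log t + 1 / t ^ 2 < 0) ∧
    IntegrableOn
      (fun t : ℝ =>
        -(Real.log (t - 1) + Real.log (t + 1) - 2 * Real.log t + 1 / t ^ 2) * t)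
      (Set.Ioi 1) ∧
    (∫ t in Set.Ioi (1 : ℝ),
        -(Real.log (t - 1) + Real.log (t + 1) - 2 * Real.log t + 1 / t ^ 2) * t) = 1 / 2 ∧
    (∀ b : ℝ, 1 < b →
      (∫ t in (1:ℝ)..b,
        |Real.log (t - 1) + Real.log (t + 1) - 2 * Real.log t + 1 / t ^ 2| * t) ≤ 1 / 2) := by
  change (∀ t : ℝ, 1 < t → h₁ t < 0) ∧ IntegrableOn (fun t => -h₁ t * t) (Ioi 1) ∧
    ∫ t in Ioi (1 : ℝ), -h₁ t * t = 1 / 2 ∧ ∀ b : ℝ, 1 < b → ∫ t in (1:ℝ)..b, |h₁ t| * t ≤ 1 / 2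
  have hcont := continuousAt_h₁Primitive_one.continuousWithinAt (s := Ici 1)
  have hderiv : ∀ t ∈ Ioi (1 : ℝ), HasDerivAt h₁Primitive (-h₁ t * t) t :=
    fun t ht => hasDerivAt_h₁Primitive ht
  have hnonneg : ∀ t ∈ Ioi (1 : ℝ), 0 ≤ -h₁ t * t := fun t ht =>
    mul_nonneg (neg_nonneg.2 (h₁_neg ht).le) (zero_lt_one.trans ht).le
  have hint := integrableOn_Ioi_deriv_of_nonneg hcont hderiv hnonneg tendsto_h₁Primitive_atTop
  have hval : ∫ t in Ioi (1 : ℝ), -h₁ t * t = 1 / 2 := by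
    rw [integral_Ioi_of_hasDerivAt_of_nonneg hcont hderiv hnonneg tendsto_h₁Primitive_atTop,
      h₁Primitive_one]
    norm_num
  refine ⟨fun t ht => h₁_neg ht, hint, hval, fun b hb => ?_⟩
  have habs : ∀ᵐ t, t ∈ uIoc 1 b → |h₁ t| * t = -h₁ t * t :=
    ae_of_all _ fun t ht => by rw [uIoc_of_le hb.le] at ht; rw [abs_of_neg (h₁_neg ht.1)]
  rw [intervalIntegral.integral_congr_ae habs, ← hval]
  exact intervalIntegral_le_integral_Ioi_of_nonneg hb.le hint hnonneg
end

section
/- Let α ∈ (−1, 0) and 0 < x < 1, and define G(x) := (1/log(1/x))·∫₁² (((t − 1)^{−α−1} + (1 + t)^{−α−1} − 2·t^{−α−1})/(1 + α))·t^{(1−α)/2}·log(2e + 1/(x·t)) dt. Then there exists a constant C with 2^{−(1+α)/2}·log(2e + 1/(2x)) ≤ C ≤ log(2e + 1/x) such that G(x) = (C/log(1/x))·(1 + 2^{−α} − 3^{−α} + α·(−4 + 5·2^{−α} − 2·3^{−α}))/((α − 1)·α·(α + 1)). In particular, ∫₁² ((t − 1)^{−α−1} + (1 + t)^{−α−1}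 − 2·t^{−α−1})/(1 + α)·t dt = (1 + 2^{−α} − 3^{−α} + α·(−4 + 5·2^{−α} − 2·3^{−α}))/((α − 1)·α·(α + 1)). -/
open scoped Real
open Set intervalIntegral

section G21aux

lemma G21_rpow_midpoint_convex {p a b : ℝ} (hp : p ≤ 0) (ha : 0 < a) (hb : 0 < b) :
    2 * ((a + b) / 2) ^ p ≤ a ^ p + b ^ p := by
  have hab : 0 < a * b := mul_pos ha hb
  have h1 : Real.sqrt (a * b) ≤ (a + b) / 2 := by
    rw [show a * b = Real.sqrt a ^ 2 * Real.sqrt b ^ 2 by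
      rw [Real.sq_sqrt ha.le, Real.sq_sqrt hb.le], ← mul_pow, Real.sqrt_sq (by positivity)]
    nlinarith [sq_nonneg (Real.sqrt a - Real.sqrt b), Real.sq_sqrt ha.le, Real.sq_sqrt hb.le]
  have h2 : ((a + b) / 2) ^ p ≤ (Real.sqrt (a * b)) ^ p :=
    Real.rpow_le_rpow_of_nonpos (Real.sqrt_pos.mpr hab) h1 hp
  have h3 : (Real.sqrt (a * b)) ^ p = Real.sqrt (a ^ p * b ^ p) := by
    rw [← Real.mul_rpow ha.le hb.le, Real.sqrt_eq_rpow, Real.sqrt_eq_rpow,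
      ← Real.rpow_mul hab.le, ← Real.rpow_mul hab.le]
    ring_nf
  have h4 : 2 * Real.sqrt (a ^ p * b ^ p) ≤ a ^ p + b ^ p := by
    nlinarith [Real.sq_sqrt (by positivity : (0:ℝ) ≤ a ^ p * b ^ p),
      sq_nonneg (Real.sqrt (a ^ p) - Real.sqrt (b ^ p)),
      Real.sqrt_mul_self (by positivity : (0:ℝ) ≤ a ^ p),
      Real.sqrt_nonneg (a ^ p * b ^ p),
      Real.sqrt_mul (by positivity : (0:ℝ) ≤ a ^ p) (b ^ p),
      Real.sq_sqrt (by positivity : (0:ℝ) ≤ a ^ p),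
      Real.sq_sqrt (by positivity : (0:ℝ) ≤ b ^ p)]
  nlinarith [h2, h3, h4]

lemma G21_aux_iA {p : ℝ} (hp : -1 < p) :
    IntervalIntegrable (fun t : ℝ => (t - 1) ^ p * t) MeasureTheory.volume 1 2 := by
  have hc : ContinuousOn (fun t : ℝ => t) (Set.uIcc ((0:ℝ)+1) (1+1)) := continuous_id.continuousOn
  have := ((intervalIntegrable_rpow' (a := 0) (b := 1) hp).comp_sub_right 1).mul_continuousOn hc
  norm_num at this; exact this

lemma G21_aux_iB {p : ℝ} (hp : -1 < p) :
    IntervalIntegrable (fun t : ℝ => (1 + t) ^ p * t) MeasureTheory.volume 1 2 := by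
  have hc : ContinuousOn (fun t : ℝ => t) (Set.uIcc ((2:ℝ)-1) (3-1)) := continuous_id.continuousOn
  have := ((intervalIntegrable_rpow' (a := 2) (b := 3) hp).comp_add_left 1).mul_continuousOn hc
  norm_num at this; exact this

lemma G21_aux_iD {p : ℝ} (hp : -1 < p) :
    IntervalIntegrable (fun t : ℝ => t ^ p * t) MeasureTheory.volume 1 2 := by
  have hc : ContinuousOn (fun t : ℝ => t) (Set.uIcc (1:ℝ) 2) := continuous_id.continuousOn
  have := (intervalIntegrable_rpow' (a := 1) (b := 2) hp).mul_continuousOn hc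
  norm_num at this; exact this

lemma G21_aux_iF {α : ℝ} (hα : α ∈ Set.Ioo (-1 : ℝ) 0) :
    IntervalIntegrable (fun t : ℝ =>
      (((t - 1) ^ (-α - 1) + (1 + t) ^ (-α - 1) - 2 * t ^ (-α - 1)) / (1 + α)) * t)
      MeasureTheory.volume 1 2 := by
  have hp : (-1:ℝ) < -α - 1 := by linarith [hα.2]
  have heq : (fun t : ℝ =>
      (((t - 1) ^ (-α - 1) + (1 + t) ^ (-α - 1) - 2 * t ^ (-α - 1)) / (1 + α)) * t)
      = fun t : ℝ => (1 + α)⁻¹ *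
        ((t - 1) ^ (-α - 1) * t + (1 + t) ^ (-α - 1) * t - 2 * (t ^ (-α - 1) * t)) := by
    funext t; ring
  rw [heq]
  exact (((G21_aux_iA hp).add (G21_aux_iB hp)).sub ((G21_aux_iD hp).const_mul 2)).const_mul _

lemma G21_model_integral {α : ℝ} (hα : α ∈ Set.Ioo (-1 : ℝ) 0) :
    (∫ t in (1:ℝ)..2,
        (((t - 1) ^ (-α - 1) + (1 + t) ^ (-α - 1) - 2 * t ^ (-α - 1)) / (1 + α)) * t) =
      (1 + (2 : ℝ) ^ (-α) - (3 : ℝ) ^ (-α) +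
          α * (-4 + 5 * (2 : ℝ) ^ (-α) - 2 * (3 : ℝ) ^ (-α))) /
        ((α - 1) * α * (α + 1)) := by
  obtain ⟨hα1, hα0⟩ := hα
  set p : ℝ := -α - 1 with hp_def
  have hp : -1 < p := by simp only [hp_def]; linarith
  have hp0 : p < 0 := by simp only [hp_def]; linarith
  have hp1 : 0 < p + 1 := by linarith
  have hp2 : 0 < p + 2 := by linarith
  have hiA := G21_aux_iA hp
  have hiB := G21_aux_iB hp
  have hiD := G21_aux_iD hp
  -- value of pieces
  have hA : (∫ t in (1:ℝ)..2, (t - 1) ^ p * t) = 1 / (p + 2) + 1 / (p + 1) := by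
    have h0 : (∫ t in (1:ℝ)..2, (t - 1) ^ p * t)
        = ∫ t in (1:ℝ)..2, (fun u : ℝ => u ^ p * (u + 1)) (t - 1) := by
      apply integral_congr; intro t _; simp only; ring_nf
    rw [h0, integral_comp_sub_right (fun u : ℝ => u ^ p * (u + 1)) 1]
    norm_num
    have h2 : (∫ u in (0:ℝ)..1, u ^ p * (u + 1))
        = ∫ u in (0:ℝ)..1, (u ^ (p+1) + u ^ p) := by
      apply integral_congr
      intro u _
      simp only
      rcases eq_or_ne u 0 with rfl | hu0
      · rw [Real.zero_rpow (by positivity : p + 1 ≠ 0), Real.zero_rpow (ne_of_lt hp0)]; ring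
      · rw [Real.rpow_add_one hu0]; ring
    rw [h2, integral_add (intervalIntegrable_rpow' (by linarith)) (intervalIntegrable_rpow' hp),
      integral_rpow (Or.inl (by linarith)), integral_rpow (Or.inl hp)]
    rw [Real.one_rpow, Real.one_rpow, Real.zero_rpow (by positivity : p + 1 + 1 ≠ 0),
      Real.zero_rpow (by positivity : p + 1 ≠ 0)]
    rw [show p + 1 + 1 = p + 2 by ring]
    ring
  have hB : (∫ t in (1:ℝ)..2, (1 + t) ^ p * t)
      = ((3:ℝ) ^ (p + 2) - 2 ^ (p + 2)) / (p + 2) - ((3:ℝ) ^ (p + 1) - 2 ^ (p + 1)) / (p + 1) := by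
    have h0 : (∫ t in (1:ℝ)..2, (1 + t) ^ p * t)
        = ∫ t in (1:ℝ)..2, (fun u : ℝ => u ^ p * (u - 1)) (t + 1) := by
      apply integral_congr; intro t _; simp only; ring_nf
    rw [h0, integral_comp_add_right (fun u : ℝ => u ^ p * (u - 1)) 1]
    norm_num
    have h2 : (∫ u in (2:ℝ)..3, u ^ p * (u - 1))
        = ∫ u in (2:ℝ)..3, (u ^ (p+1) - u ^ p) := by
      apply integral_congr
      intro u hu
      simp only
      rw [uIcc_of_le (by norm_num)] at hu
      have hu0 : u ≠ 0 := by have := hu.1; intro h; rw [h] at this; norm_num at this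
      rw [Real.rpow_add_one hu0]; ring
    rw [h2, integral_sub (intervalIntegrable_rpow' (by linarith)) (intervalIntegrable_rpow' hp),
      integral_rpow (Or.inl (by linarith)), integral_rpow (Or.inl hp)]
    rw [show p + 1 + 1 = p + 2 by ring]
  have hD : (∫ t in (1:ℝ)..2, t ^ p * t) = ((2:ℝ) ^ (p + 2) - 1) / (p + 2) := by
    have h2 : (∫ t in (1:ℝ)..2, t ^ p * t) = ∫ t in (1:ℝ)..2, t ^ (p+1) := by
      apply integral_congr
      intro u hu
      simp only
      rw [uIcc_of_le (by norm_num)] at hu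
      have hu0 : u ≠ 0 := by have := hu.1; intro h; rw [h] at this; norm_num at this
      rw [Real.rpow_add_one hu0]
    rw [h2, integral_rpow (Or.inl (by linarith)), Real.one_rpow,
      show p + 1 + 1 = p + 2 by ring]
  -- split the integral
  have hsplit : (∫ t in (1:ℝ)..2,
        (((t - 1) ^ (-α - 1) + (1 + t) ^ (-α - 1) - 2 * t ^ (-α - 1)) / (1 + α)) * t)
      = (1 + α)⁻¹ * ((∫ t in (1:ℝ)..2, (t - 1) ^ p * t) + (∫ t in (1:ℝ)..2, (1 + t) ^ p * t)
          - 2 * (∫ t in (1:ℝ)..2, t ^ p * t)) := by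
    have h0 : (∫ t in (1:ℝ)..2,
          (((t - 1) ^ (-α - 1) + (1 + t) ^ (-α - 1) - 2 * t ^ (-α - 1)) / (1 + α)) * t)
        = ∫ t in (1:ℝ)..2,
            (1 + α)⁻¹ * ((t - 1) ^ p * t + (1 + t) ^ p * t - 2 * (t ^ p * t)) := by
      apply integral_congr; intro t _; simp only [hp_def]; ring
    rw [h0, integral_const_mul, integral_sub (hiA.add hiB) (hiD.const_mul 2),
      integral_add hiA hiB, integral_const_mul]
  rw [hsplit, hA, hB, hD]
  -- final algebra
  have e2 : (2:ℝ) ^ (p + 1) = 2 ^ (-α) := by rw [show p + 1 = -α by rw [hp_def]; ring]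
  have e3 : (3:ℝ) ^ (p + 1) = 3 ^ (-α) := by rw [show p + 1 = -α by rw [hp_def]; ring]
  have e2' : (2:ℝ) ^ (p + 2) = 2 * 2 ^ (-α) := by
    rw [show p + 2 = 1 + -α by rw [hp_def]; ring, Real.rpow_add (by norm_num), Real.rpow_one]
  have e3' : (3:ℝ) ^ (p + 2) = 3 * 3 ^ (-α) := by
    rw [show p + 2 = 1 + -α by rw [hp_def]; ring, Real.rpow_add (by norm_num), Real.rpow_one]
  rw [e2, e3, e2', e3', show p + 1 = -α by rw [hp_def]; ring,
    show p + 2 = 1 - α by rw [hp_def]; ring]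
  have h4 : α - 1 ≠ 0 := by intro h; nlinarith
  have h5 : α ≠ 0 := ne_of_lt hα0
  have h6 : α + 1 ≠ 0 := by intro h; nlinarith
  have hn1 : -α ≠ 0 := by intro h; apply h5; linarith
  have hn2 : (1:ℝ) - α ≠ 0 := by intro h; apply h4; linarith
  have h3 : (1:ℝ) + α ≠ 0 := by intro h; apply h6; linarith
  rw [eq_div_iff (mul_ne_zero (mul_ne_zero h4 h5) h6)]
  field_simp
  ring

end G21aux

/-- The part `G_{α,2,1}(x)` of the operator-norm bound over `[1,2]`: value of the weighted
integral up to a factor `C ∈ [2^{-(1+α)/2} log(2e+1/(2x)), log(2e+1/x)]`, together with the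
explicit value of the underlying model integral. -/
theorem G21_value (α x : ℝ) (hα : α ∈ Set.Ioo (-1 : ℝ) 0) (hx0 : 0 < x) (hx1 : x < 1) :
    (∃ C : ℝ,
      (2 : ℝ) ^ (-((1 + α) / 2)) * Real.log (2 * Real.exp 1 + 1 / (2 * x)) ≤ C ∧
      C ≤ Real.log (2 * Real.exp 1 + 1 / x) ∧
      (1 / Real.log (1 / x)) * (∫ t in (1:ℝ)..2,
          (((t - 1) ^ (-α - 1) + (1 + t) ^ (-α - 1) - 2 * t ^ (-α - 1)) / (1 + α)) *
            t ^ ((1 - α) / 2) * Real.log (2 * Real.exp 1 + 1 / (x * t))) =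
        C / Real.log (1 / x) *
          ((1 + (2 : ℝ) ^ (-α) - (3 : ℝ) ^ (-α) +
              α * (-4 + 5 * (2 : ℝ) ^ (-α) - 2 * (3 : ℝ) ^ (-α))) /
            ((α - 1) * α * (α + 1)))) ∧
    (∫ t in (1:ℝ)..2,
        (((t - 1) ^ (-α - 1) + (1 + t) ^ (-α - 1) - 2 * t ^ (-α - 1)) / (1 + α)) * t) =
      (1 + (2 : ℝ) ^ (-α) - (3 : ℝ) ^ (-α) +
          α * (-4 + 5 * (2 : ℝ) ^ (-α) - 2 * (3 : ℝ) ^ (-α))) /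
        ((α - 1) * α * (α + 1)) := by
  obtain ⟨hα1, hα0⟩ := hα
  refine ⟨?_, G21_model_integral ⟨hα1, hα0⟩⟩
  set F : ℝ → ℝ := fun t =>
    (((t - 1) ^ (-α - 1) + (1 + t) ^ (-α - 1) - 2 * t ^ (-α - 1)) / (1 + α)) * t with hF_def
  set g : ℝ → ℝ := fun t =>
    t ^ (-((1 + α) / 2)) * Real.log (2 * Real.exp 1 + 1 / (x * t)) with hg_def
  set m : ℝ := (2 : ℝ) ^ (-((1 + α) / 2)) * Real.log (2 * Real.exp 1 + 1 / (2 * x)) with hm_def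
  set M : ℝ := Real.log (2 * Real.exp 1 + 1 / x) with hM_def
  set I : ℝ := ∫ t in (1:ℝ)..2, F t with hI_def
  -- bounds on g on [1,2]
  have hgb : ∀ t ∈ Set.Icc (1:ℝ) 2, m ≤ g t ∧ g t ≤ M := by
    intro t ht
    obtain ⟨ht1, ht2⟩ := ht
    have ht0 : (0:ℝ) < t := by linarith
    have hxt : 0 < x * t := mul_pos hx0 ht0
    have hq : -((1 + α) / 2) ≤ 0 := by linarith
    have he : (1:ℝ) ≤ Real.exp 1 := Real.one_le_exp zero_le_one
    have h2x : (0:ℝ) < 1 / (2 * x) := by positivity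
    have hxt' : (0:ℝ) < 1 / (x * t) := by positivity
    have hx' : (0:ℝ) < 1 / x := by positivity
    have harg1 : (1:ℝ) ≤ 2 * Real.exp 1 + 1 / (2 * x) := by linarith
    have harg2 : (1:ℝ) ≤ 2 * Real.exp 1 + 1 / (x * t) := by linarith
    have hd1 : 1 / (2 * x) ≤ 1 / (x * t) := one_div_le_one_div_of_le hxt (by nlinarith)
    have hd2 : 1 / (x * t) ≤ 1 / x := one_div_le_one_div_of_le hx0 (by nlinarith)
    have hL1 : Real.log (2 * Real.exp 1 + 1 / (2 * x)) ≤ Real.log (2 * Real.exp 1 + 1 / (x * t)) :=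
      (Real.log_le_log_iff (by linarith) (by linarith)).mpr (by linarith)
    have hL2 : Real.log (2 * Real.exp 1 + 1 / (x * t)) ≤ Real.log (2 * Real.exp 1 + 1 / x) :=
      (Real.log_le_log_iff (by linarith) (by linarith)).mpr (by linarith)
    have ht2q : (2:ℝ) ^ (-((1 + α) / 2)) ≤ t ^ (-((1 + α) / 2)) :=
      Real.rpow_le_rpow_of_nonpos ht0 ht2 hq
    have ht1q : t ^ (-((1 + α) / 2)) ≤ 1 := by
      have := Real.rpow_le_rpow_of_nonpos one_pos ht1 hq
      rwa [Real.one_rpow] at this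
    constructor
    · exact mul_le_mul ht2q hL1 (Real.log_nonneg harg1) (Real.rpow_nonneg ht0.le _)
    · calc t ^ (-((1 + α) / 2)) * Real.log (2 * Real.exp 1 + 1 / (x * t))
          ≤ 1 * Real.log (2 * Real.exp 1 + 1 / x) :=
            mul_le_mul ht1q hL2 (Real.log_nonneg harg2) zero_le_one
      _ = _ := one_mul _
  -- nonnegativity of F on (1,2]
  have hFnn : ∀ t ∈ Set.Ioc (1:ℝ) 2, 0 ≤ F t := by
    intro t ht
    obtain ⟨ht1, ht2⟩ := ht
    have hconv := G21_rpow_midpoint_convex (p := -α - 1) (a := t - 1) (b := t + 1)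
      (by linarith) (by linarith) (by linarith)
    rw [show (t - 1 + (t + 1)) / 2 = t by ring] at hconv
    have hN : 0 ≤ (t - 1) ^ (-α - 1) + (1 + t) ^ (-α - 1) - 2 * t ^ (-α - 1) := by
      rw [show (1:ℝ) + t = t + 1 by ring]; linarith
    exact mul_nonneg (div_nonneg hN (by linarith)) (by linarith)
  -- integrability
  have hiF : IntervalIntegrable F MeasureTheory.volume 1 2 := G21_aux_iF ⟨hα1, hα0⟩
  have hgcont : ContinuousOn g (Set.uIcc (1:ℝ) 2) := by
    rw [uIcc_of_le (by norm_num)]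
    have hpos : ∀ t ∈ Set.Icc (1:ℝ) 2, (0:ℝ) < t := fun t ht => by linarith [ht.1]
    apply ContinuousOn.mul
    · exact ContinuousOn.rpow_const continuous_id.continuousOn
        (fun t ht => Or.inl (hpos t ht).ne')
    · apply ContinuousOn.log
      · exact continuousOn_const.add (continuousOn_const.div
          (continuousOn_const.mul continuous_id.continuousOn)
          (fun t ht => (mul_pos hx0 (hpos t ht)).ne'))
      · intro t ht
        have he : (1:ℝ) ≤ Real.exp 1 := Real.one_le_exp zero_le_one
        have hxt : (0:ℝ) < x * t := mul_pos hx0 (hpos t ht)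
        have h1 : (0:ℝ) < 1 / (x * t) := by positivity
        have h2 : (0:ℝ) < 2 * Real.exp 1 + 1 / (x * t) := by linarith
        exact h2.ne'
  have hiJ : IntervalIntegrable (fun t => F t * g t) MeasureTheory.volume 1 2 :=
    hiF.mul_continuousOn hgcont
  -- the weighted integral equals ∫ F g
  have hJeq : (∫ t in (1:ℝ)..2,
        (((t - 1) ^ (-α - 1) + (1 + t) ^ (-α - 1) - 2 * t ^ (-α - 1)) / (1 + α)) *
          t ^ ((1 - α) / 2) * Real.log (2 * Real.exp 1 + 1 / (x * t)))
      = ∫ t in (1:ℝ)..2, F t * g t := by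
    apply integral_congr
    intro t ht
    rw [uIcc_of_le (by norm_num)] at ht
    have ht0 : (0:ℝ) < t := by linarith [ht.1]
    simp only [hF_def, hg_def]
    rw [show (1 - α) / 2 = 1 + -((1 + α) / 2) by ring, Real.rpow_add ht0, Real.rpow_one]
    ring
  set J : ℝ := ∫ t in (1:ℝ)..2, F t * g t with hJ_def
  -- a.e. facts
  have hne1 : ∀ᵐ t : ℝ, t ≠ (1:ℝ) := by
    refine MeasureTheory.ae_iff.mpr ?_
    simp only [ne_eq, not_not, Set.setOf_eq_eq_singleton]
    exact Real.volume_singleton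
  have hI0 : 0 ≤ I := by
    apply integral_nonneg_of_ae_restrict (by norm_num)
    refine (MeasureTheory.ae_restrict_iff' measurableSet_Icc).mpr ?_
    filter_upwards [hne1] with t ht htm
    exact hFnn t ⟨lt_of_le_of_ne htm.1 (Ne.symm ht), htm.2⟩
  have hlow : m * I ≤ J := by
    have h : (∫ t in (1:ℝ)..2, F t * m) ≤ ∫ t in (1:ℝ)..2, F t * g t := by
      apply integral_mono_ae_restrict (by norm_num) (hiF.mul_const m) hiJ
      refine (MeasureTheory.ae_restrict_iff' measurableSet_Icc).mpr ?_
      filter_upwards [hne1] with t ht htm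
      exact mul_le_mul_of_nonneg_left (hgb t htm).1
        (hFnn t ⟨lt_of_le_of_ne htm.1 (Ne.symm ht), htm.2⟩)
    rwa [integral_mul_const, mul_comm] at h
  have hupp : J ≤ M * I := by
    have h : (∫ t in (1:ℝ)..2, F t * g t) ≤ ∫ t in (1:ℝ)..2, F t * M := by
      apply integral_mono_ae_restrict (by norm_num) hiJ (hiF.mul_const M)
      refine (MeasureTheory.ae_restrict_iff' measurableSet_Icc).mpr ?_
      filter_upwards [hne1] with t ht htm
      exact mul_le_mul_of_nonneg_left (hgb t htm).2
        (hFnn t ⟨lt_of_le_of_ne htm.1 (Ne.symm ht), htm.2⟩)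
    rwa [integral_mul_const, mul_comm (∫ t in (1:ℝ)..2, F t) M] at h
  have hmM : m ≤ M := le_trans (hgb 1 (by norm_num)).1 (hgb 1 (by norm_num)).2
  have hEI : (1 + (2 : ℝ) ^ (-α) - (3 : ℝ) ^ (-α) +
      α * (-4 + 5 * (2 : ℝ) ^ (-α) - 2 * (3 : ℝ) ^ (-α))) /
        ((α - 1) * α * (α + 1)) = I := (G21_model_integral ⟨hα1, hα0⟩).symm
  by_cases hI : I = 0
  · refine ⟨M, hmM, le_refl M, ?_⟩
    have hJ0 : J = 0 := le_antisymm (by rw [hI] at hupp; linarith) (by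
      rw [hI] at hlow
      have hm0 : 0 ≤ m := by
        have he : (1:ℝ) ≤ Real.exp 1 := Real.one_le_exp zero_le_one
        have h2x : (0:ℝ) < 1 / (2 * x) := by positivity
        exact mul_nonneg (Real.rpow_nonneg (by norm_num) _) (Real.log_nonneg (by linarith))
      nlinarith)
    rw [hJeq, hJ0, hEI, hI, mul_zero, mul_zero]
  · have hIpos : 0 < I := lt_of_le_of_ne hI0 (Ne.symm hI)
    refine ⟨J / I, (le_div_iff₀ hIpos).mpr hlow, (div_le_iff₀ hIpos).mpr hupp, ?_⟩
    rw [hJeq, hEI]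
    have hlg : 0 < Real.log (1 / x) := Real.log_pos (by rw [lt_div_iff₀ hx0]; linarith)
    field_simp
end
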